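/- arXiv:1204.1669 — 4 statements merged into one kernel-verified Lean document; each statement's English description precedes it below -/
import Mathlib

section
/- Under Assumptions (A1) and (A2), if the Tikhonov functional u ↦ S(F(u); g^obs) + α·R(u) has a global minimizer u_α over 𝔅, then for all α > 0 and all err ≥ 0 one has β·D_{u*}(u_α, u†) ≤ err/α + (−φ)*( −1/(C_err·α) ). -/
open scoped ENNReal

noncomputable section


lemma ennreal_coe_eq_real {x : ℝ≥0∞} (hx : x ≠ ⊤) :
    ((x : EReal)) = ((x.toReal : ℝ) : EReal) := by
  rw [← EReal.toReal_coe_ennreal]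
  exact (EReal.coe_toReal (by simpa using hx) (EReal.coe_ennreal_ne_bot x)).symm

/-- The Fenchel conjugate of `-φ` (extended by `+∞` to negative arguments),
`(−φ)*(s) = sup_{τ ≥ 0} (s·τ + φ(τ))`. -/
def negPhiStar (φ : ℝ → ℝ) (s : ℝ) : ℝ :=
  sSup { y | ∃ τ ≥ (0 : ℝ), y = s * τ + φ τ }

/-- Evaluation `φ(τ)` of an index function at an extended argument `τ ∈ [0,∞]`,
with the convention `φ(∞) = ∞`. -/
def phiE (φ : ℝ → ℝ) (τ : ℝ≥0∞) : EReal :=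
  if τ = ⊤ then (⊤ : EReal) else ((φ τ.toReal : ℝ) : EReal)

/-- The Bregman distance `D_{u*}(u, u†) = R(u) − R(u†) − ⟨u*, u − u†⟩` of the
penalty functional `R : X → (−∞,∞]` with respect to `u* ∈ ∂R(u†)`. -/
def bregman {X : Type*} [NormedAddCommGroup X] [NormedSpace ℝ X]
    (R : X → EReal) (ustar : X →L[ℝ] ℝ) (udag u : X) : EReal :=
  R u - R udag - ((ustar (u - udag) : ℝ) : EReal)

set_option maxHeartbeats 1000000

/-- **Deterministic error bound for Tikhonov-type regularization
(Theorem `det_conv`, part 1).**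
Under Assumption (A1) (the exact fidelity `T ≥ 0` vanishes at `(g†, g†)` and the
approximate fidelity `S` satisfies `S(g; g^obs) − S(g†; g^obs) ≥ T(g; g†)/C_err − err`
on `F(𝔅)`) and Assumption (A2) (variational source condition for a proper convex
penalty `R` with subgradient `u* ∈ ∂R(u†)`, `β > 0` and an index function `φ` with
`φ²` concave), any global minimizer `u_α` of the Tikhonov functional
`u ↦ S(F(u); g^obs) + α·R(u)` over `𝔅` satisfies, for all `α > 0` and `err ≥ 0`,
`β·D_{u*}(u_α, u†) ≤ err/α + (−φ)*(−1/(C_err·α))`. -/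
theorem statement_1
    {X Y Yobs : Type*} [NormedAddCommGroup X] [NormedSpace ℝ X] [CompleteSpace X]
    (B : Set X) (udag : X) (hudag : udag ∈ B)
    (F : X → Y) (gobs : Yobs)
    (S : Y → Yobs → ℝ≥0∞) (T : Y → Y → ℝ≥0∞)
    (Cerr err : ℝ) (hCerr : 1 ≤ Cerr) (herr : 0 ≤ err)
    -- Assumption (A1)
    (hT0 : T (F udag) (F udag) = 0)
    (hA1 : ∀ u ∈ B,
      ((1 / Cerr : ℝ) : EReal) * ((T (F u) (F udag) : ℝ≥0∞) : EReal) - ((err : ℝ) : EReal)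
        ≤ ((S (F u) gobs : ℝ≥0∞) : EReal) - ((S (F udag) gobs : ℝ≥0∞) : EReal))
    -- the penalty is proper and convex
    (R : X → EReal)
    (hRbot : ∀ u, R u ≠ ⊥) (hRtop : ∃ u, R u ≠ ⊤)
    (hRconv : ∀ u v : X, ∀ a b : ℝ, 0 ≤ a → 0 ≤ b → a + b = 1 →
      R (a • u + b • v) ≤ (a : EReal) * R u + (b : EReal) * R v)
    -- `u*` is a subgradient of `R` at `u†`
    (ustar : X →L[ℝ] ℝ)
    (hsub : ∀ u : X, R udag + ((ustar (u - udag) : ℝ) : EReal) ≤ R u)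
    -- Assumption (A2): variational source condition
    (φ : ℝ → ℝ) (β : ℝ) (hβ : 0 < β)
    (hφ0 : φ 0 = 0) (hφmono : MonotoneOn φ (Set.Ici (0 : ℝ)))
    (hφnonneg : ∀ τ ≥ (0 : ℝ), 0 ≤ φ τ)
    (hφ2concave : ConcaveOn ℝ (Set.Ici (0 : ℝ)) fun τ => φ τ ^ 2)
    (hA2 : ∀ u ∈ B, ((β : ℝ) : EReal) * bregman R ustar udag u
        ≤ R u - R udag + phiE φ (T (F u) (F udag)))
    -- `u_α` is a global minimizer of the Tikhonov functional over `𝔅`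
    (α : ℝ) (hα : 0 < α) (uα : X) (huα : uα ∈ B)
    (hmin : ∀ u ∈ B,
      ((S (F uα) gobs : ℝ≥0∞) : EReal) + ((α : ℝ) : EReal) * R uα
        ≤ ((S (F u) gobs : ℝ≥0∞) : EReal) + ((α : ℝ) : EReal) * R u) :
    ((β : ℝ) : EReal) * bregman R ustar udag uα
      ≤ ((err / α + negPhiStar φ (-(1 / (Cerr * α))) : ℝ) : EReal) := by
  have hCpos : (0:ℝ) < Cerr := lt_of_lt_of_le one_pos hCerr
  have hCα : (0:ℝ) < Cerr * α := mul_pos hCpos hα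
  set s : ℝ := -(1 / (Cerr * α)) with hs
  have hsneg : s < 0 := by
    rw [hs]; simp only [neg_neg, neg_lt, neg_zero]; positivity
  -- R udag is finite
  obtain ⟨u0, hu0⟩ := hRtop
  have hRdtop : R udag ≠ ⊤ := by
    intro h
    have h2 := hsub u0
    rw [h, EReal.top_add_coe] at h2
    exact hu0 (top_le_iff.mp h2)
  set rd : ℝ := (R udag).toReal with hrddef
  have hRd : R udag = ((rd : ℝ) : EReal) := (EReal.coe_toReal hRdtop (hRbot udag)).symm
  -- S (F udag) gobs is finite
  have hSdtop : S (F udag) gobs ≠ ⊤ := by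
    intro h
    have h1 := hA1 udag hudag
    rw [hT0, h] at h1
    simp only [EReal.coe_ennreal_zero, mul_zero, zero_sub, EReal.coe_ennreal_top] at h1
    rw [show (⊤ : EReal) - ⊤ = ⊥ from rfl, le_bot_iff] at h1
    exact EReal.coe_ne_bot _ (by exact_mod_cast h1)
  set sd : ℝ := (S (F udag) gobs).toReal with hsddef
  have hSd : ((S (F udag) gobs : ℝ≥0∞) : EReal) = ((sd : ℝ) : EReal) :=
    ennreal_coe_eq_real hSdtop
  have hm0 := hmin udag hudag
  rw [hSd, hRd] at hm0
  -- R uα is finite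
  have hRαtop : R uα ≠ ⊤ := by
    intro h
    rw [h, EReal.mul_top_of_pos (by exact_mod_cast hα),
      EReal.add_top_of_ne_bot (EReal.coe_ennreal_ne_bot _)] at hm0
    rw [show ((α:ℝ):EReal) * ((rd:ℝ):EReal) = ((α*rd : ℝ):EReal) from (EReal.coe_mul _ _).symm,
      show ((sd:ℝ):EReal) + ((α*rd:ℝ):EReal) = ((sd + α*rd : ℝ):EReal) from
        (EReal.coe_add _ _).symm, top_le_iff] at hm0
    exact EReal.coe_ne_top _ hm0
  set rα : ℝ := (R uα).toReal with hrαdef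
  have hRα : R uα = ((rα : ℝ) : EReal) := (EReal.coe_toReal hRαtop (hRbot uα)).symm
  rw [hRα] at hm0
  -- S (F uα) gobs is finite
  have hSαtop : S (F uα) gobs ≠ ⊤ := by
    intro h
    rw [h, EReal.coe_ennreal_top,
      show ((α:ℝ):EReal) * ((rα:ℝ):EReal) = ((α*rα : ℝ):EReal) from (EReal.coe_mul _ _).symm,
      EReal.top_add_coe,
      show ((α:ℝ):EReal) * ((rd:ℝ):EReal) = ((α*rd : ℝ):EReal) from (EReal.coe_mul _ _).symm,
      show ((sd:ℝ):EReal) + ((α*rd:ℝ):EReal) = ((sd + α*rd : ℝ):EReal) from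
        (EReal.coe_add _ _).symm, top_le_iff] at hm0
    exact EReal.coe_ne_top _ hm0
  set sα : ℝ := (S (F uα) gobs).toReal with hsαdef
  have hSα : ((S (F uα) gobs : ℝ≥0∞) : EReal) = ((sα : ℝ) : EReal) :=
    ennreal_coe_eq_real hSαtop
  rw [hSα] at hm0
  have hm : sα + α * rα ≤ sd + α * rd := by exact_mod_cast hm0
  -- T (F uα) (F udag) is finite
  have h10 := hA1 uα huα
  rw [hSα, hSd] at h10
  have hTαtop : T (F uα) (F udag) ≠ ⊤ := by
    intro h
    rw [h, EReal.coe_ennreal_top,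
      EReal.mul_top_of_pos (by exact_mod_cast one_div_pos.mpr hCpos),
      EReal.top_sub_coe,
      show ((sα:ℝ):EReal) - ((sd:ℝ):EReal) = ((sα - sd : ℝ):EReal) from
        (EReal.coe_sub _ _).symm, top_le_iff] at h10
    exact EReal.coe_ne_top _ h10
  set t : ℝ := (T (F uα) (F udag)).toReal with htdef
  have ht0 : 0 ≤ t := ENNReal.toReal_nonneg
  have hTco : ((T (F uα) (F udag) : ℝ≥0∞) : EReal) = ((t : ℝ) : EReal) :=
    ennreal_coe_eq_real hTαtop
  rw [hTco] at h10
  have h1 : (1 / Cerr) * t - err ≤ sα - sd := by exact_mod_cast h10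
  -- A2 in real form
  set c : ℝ := ustar (uα - udag) with hcdef
  have hbreg : bregman R ustar udag uα = ((rα - rd - c : ℝ) : EReal) := by
    rw [bregman, hRα, hRd]; norm_cast
  have h20 := hA2 uα huα
  rw [hbreg, hRα, hRd, phiE, if_neg hTαtop, ← htdef] at h20
  have h2 : β * (rα - rd - c) ≤ (rα - rd) + φ t := by exact_mod_cast h20
  clear_value rd sd rα sα t c
  clear hm0 h10 h20 hA1 hA2 hmin hsub hRconv hSd hSα hTco
  -- the sup bound
  have hφ1 : 0 ≤ φ 1 := hφnonneg 1 one_pos.le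
  set a : ℝ := -s with hadef
  have ha : 0 < a := by rw [hadef]; linarith
  set M : ℝ := φ 1 + φ 1 ^ 2 / (4 * a) with hM
  clear_value s a M
  have hbdd : ∀ y ∈ {y | ∃ τ ≥ (0:ℝ), y = s * τ + φ τ}, y ≤ M := by
    rintro y ⟨τ, hτ0, rfl⟩
    have hφτ : 0 ≤ φ τ := hφnonneg τ hτ0
    rcases le_total τ 1 with hτ1 | hτ1
    · have h1' : φ τ ≤ φ 1 := hφmono (Set.mem_Ici.mpr hτ0) (Set.mem_Ici.mpr one_pos.le) hτ1
      have h2' : s * τ ≤ 0 := mul_nonpos_of_nonpos_of_nonneg hsneg.le hτ0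
      have h3' : 0 ≤ φ 1 ^ 2 / (4 * a) := by positivity
      rw [hM]; linarith
    · have hτpos : (0:ℝ) < τ := lt_of_lt_of_le one_pos hτ1
      have h1τ : 1/τ ≤ 1 := by rw [div_le_one hτpos]; exact hτ1
      have hconc := hφ2concave.2 (Set.mem_Ici.mpr hτ0) (Set.mem_Ici.mpr (le_refl (0:ℝ)))
        (show (0:ℝ) ≤ 1/τ by positivity)
        (show (0:ℝ) ≤ 1 - 1/τ by linarith)
        (by ring)
      simp only [smul_eq_mul, hφ0, mul_zero, add_zero] at hconc
      rw [show (1/τ) * τ = 1 from one_div_mul_cancel hτpos.ne'] at hconc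
      have hconc2 : (1/τ) * φ τ ^ 2 ≤ φ 1 ^ 2 := by nlinarith [sq_nonneg (φ 0), hconc]
      have hq : φ τ ^ 2 ≤ τ * φ 1 ^ 2 := by
        rw [div_mul_eq_mul_div, one_mul, div_le_iff₀ hτpos] at hconc2
        linarith
      have key : 4 * a * (s * τ + φ τ) ≤ φ 1 ^ 2 := by
        have hse : s = -a := by rw [hadef]; ring
        rcases eq_or_ne (φ 1) 0 with hz | hz
        · have hy : φ τ ^ 2 ≤ 0 := by simpa [hz] using hq
          have hφτ0 : φ τ = 0 :=
            pow_eq_zero_iff two_ne_zero |>.mp (le_antisymm hy (sq_nonneg _))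
          have h0 : (0:ℝ) ≤ 4 * (a * (a * τ)) := by positivity
          rw [hz, hφτ0, hse]
          nlinarith [h0]
        · have hz2 : 0 < φ 1 ^ 2 := by positivity
          have cert : 0 ≤ φ 1 ^ 2 * (φ 1 ^ 2 - 4 * a * (s * τ + φ τ)) := by
            rw [hse]
            have hterm : (0:ℝ) ≤ 4 * (a * a) * (τ * φ 1 ^ 2 - φ τ ^ 2) :=
              mul_nonneg (by positivity) (by linarith)
            calc (0:ℝ) ≤ (φ 1 ^ 2 - 2 * a * φ τ) ^ 2 + 4 * (a * a) * (τ * φ 1 ^ 2 - φ τ ^ 2) :=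
                  add_nonneg (sq_nonneg _) hterm
              _ = φ 1 ^ 2 * (φ 1 ^ 2 - 4 * a * (-a * τ + φ τ)) := by ring
          have := (mul_nonneg_iff_of_pos_left hz2).mp cert
          linarith
      have h4a : (0:ℝ) < 4 * a := by linarith
      have hyb : s * τ + φ τ ≤ φ 1 ^ 2 / (4 * a) := by
        rw [le_div_iff₀ h4a]; linarith
      rw [hM]; linarith
  have hmem : s * t + φ t ∈ {y | ∃ τ ≥ (0:ℝ), y = s * τ + φ τ} := ⟨t, ht0, rfl⟩
  have hN : s * t + φ t ≤ negPhiStar φ s := le_csSup ⟨M, hbdd⟩ hmem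
  -- conclude
  rw [hbreg]
  have h5 : α * (rα - rd) ≤ err - (1 / Cerr) * t := by
    have hexp : α * (rα - rd) = α * rα - α * rd := by ring
    rw [hexp]; linarith
  have h6 : rα - rd ≤ err / α + s * t := by
    have h7 : rα - rd ≤ (err - (1 / Cerr) * t) / α := by
      rw [le_div_iff₀ hα]; linarith
    have h8 : (err - (1 / Cerr) * t) / α = err / α + s * t := by
      rw [hs]; field_simp; ring
    linarith
  have hfinal : β * (rα - rd - c) ≤ err / α + negPhiStar φ s := by linarith
  exact_mod_cast hfinal

end
end

section
/- Under Assumptions (A1) and (A2) with err > 0, the infimum over α > 0 of the function α ↦ err/α + (−φ)*( −1/(C_err·α) ) is attained at α = ᾱ if and only if −1/(C_err·ᾱ) ∈ ∂(−φ)(C_err·err), and in that case the global minimizer u_ᾱ of the Tikhonov functional satisfies β·D_{u*}(u_ᾱ, u†) ≤ √(C_err)·φ(err). -/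
open scoped ENNReal

noncomputable section

/-- The convex subdifferential of `-φ` (viewed as a convex function on `[0,∞)`)
at a point `x ≥ 0`. -/
def negPhiSubdiff (φ : ℝ → ℝ) (x : ℝ) : Set ℝ :=
  { m | ∀ τ ≥ (0 : ℝ), m * (τ - x) ≤ φ x - φ τ }

/-!
Substituting `s = -1/(C_err α)` turns `α ↦ err/α + (−φ)*(−1/(C_err α))` into the dual objective
`s ↦ -s·x + (−φ)*(s)` on `s < 0`, with `x = C_err·err`. By Fenchel–Young this objective is at least
`φ(x)`, with equality exactly at the subgradients of `−φ` at `x`; since `φ` is concave and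
monotone, `−φ` has a nonpositive subgradient at `x`, and perturbing it shows that the infimum is
`φ(x)`, so the minimizers are exactly the subgradients. Concavity of `φ²` makes `φ` concave, keeps
`(−φ)*` finite on `s < 0` (`φ` grows at most like `√τ`) and gives `φ(C τ) ≤ √C·φ(τ)`.

For the error bound, compare the Tikhonov functional at `u_ᾱ` with its value at `u†`, bound the
data misfit by (A1) and use the subgradient inequality at `τ = T(F(u_ᾱ); g†)`:
this gives `R(u_ᾱ) − R(u†) + φ(τ) ≤ φ(C_err·err)`, which is inserted into (A2).
-/

open Set

theorem concaveOn_of_concaveOn_sq {E : Type*} [AddCommGroup E] [Module ℝ E] {s : Set E}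
    {f : E → ℝ} (hnn : ∀ x ∈ s, 0 ≤ f x) (h : ConcaveOn ℝ s fun x => f x ^ 2) :
    ConcaveOn ℝ s f := by
  refine ⟨h.1, fun x hx y hy a b ha hb hab => ?_⟩
  have hxy := h.2 hx hy ha hb hab
  simp only [smul_eq_mul] at hxy ⊢
  refine le_of_pow_le_pow_left₀ two_ne_zero (hnn _ (h.1 hx hy ha hb hab)) ?_
  -- `a f(x)² + b f(y)² - (a f(x) + b f(y))² = a b (f(x) - f(y))²` when `a + b = 1`
  nlinarith [mul_nonneg (mul_nonneg ha hb) (sq_nonneg (f x - f y))]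

theorem ConcaveOn.map_mul_le_mul {f : ℝ → ℝ} (hf : ConcaveOn ℝ (Ici 0) f) (h0 : 0 ≤ f 0)
    {c x : ℝ} (hc : 1 ≤ c) (hx : 0 ≤ x) : f (c * x) ≤ c * f x := by
  have hc0 : 0 < c := by linarith
  have h := hf.2 (mem_Ici.2 (mul_nonneg hc0.le hx)) self_mem_Ici (inv_nonneg.2 hc0.le)
    (sub_nonneg.2 (inv_le_one_of_one_le₀ hc)) (add_sub_cancel _ _)
  simp only [smul_eq_mul, mul_zero, add_zero, inv_mul_cancel_left₀ hc0.ne'] at h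
  rw [← inv_mul_le_iff₀ hc0]
  nlinarith [mul_nonneg (sub_nonneg.2 (inv_le_one_of_one_le₀ hc)) h0]

theorem isMinOn_comp_iff_of_surjOn {α β γ : Type*} [Preorder γ] {f : β → γ} {g : α → β}
    {s : Set α} {t : Set β} {a : α} (hmaps : MapsTo g s t) (hsurj : SurjOn g s t) :
    IsMinOn (f ∘ g) s a ↔ IsMinOn f t (g a) := by
  simp only [isMinOn_iff, Function.comp_apply]
  refine ⟨fun h y hy => ?_, fun h x hx => h _ (hmaps hx)⟩
  obtain ⟨x, hx, rfl⟩ := hsurj hy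
  exact h x hx

theorem isMinOn_Ioi_comp_neg_one_div_mul_iff {f : ℝ → ℝ} {c a : ℝ} (hc : 0 < c) :
    IsMinOn (fun α => f (-(1 / (c * α)))) (Ioi 0) a ↔ IsMinOn f (Iio 0) (-(1 / (c * a))) := by
  refine isMinOn_comp_iff_of_surjOn (g := fun α => -(1 / (c * α))) (fun α hα => ?_)
    fun s hs => ⟨-(1 / (c * s)), ?_, ?_⟩
  · exact neg_neg_of_pos (one_div_pos.2 (mul_pos hc hα))
  · exact neg_pos.2 (one_div_neg.2 (mul_neg_of_pos_of_neg hc hs))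
  · field_simp

theorem ne_top_of_coe_mul_sub_le_sub {c e : ℝ} (hc : 0 ≤ c) {t x y : ℝ≥0∞}
    (h : (c : EReal) * t - e ≤ x - y) : y ≠ ⊤ := by
  rintro rfl
  have hne_bot : (c : EReal) * t - e ≠ ⊥ :=
    EReal.add_ne_bot_iff.2 ⟨ne_bot_of_le_ne_bot EReal.zero_ne_bot
      (EReal.mul_nonneg (EReal.coe_nonneg.2 hc) (EReal.coe_ennreal_nonneg _)), EReal.coe_ne_bot _⟩
  -- in `EReal`, `x - ⊤ = ⊥` for every `x`
  rw [EReal.coe_ennreal_top, EReal.sub_top, le_bot_iff] at h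
  exact hne_bot h

section IndexFunction

variable {φ : ℝ → ℝ}

theorem map_mul_le_sqrt_mul (hnn : ∀ τ ≥ (0 : ℝ), 0 ≤ φ τ)
    (h2 : ConcaveOn ℝ (Ici 0) fun τ => φ τ ^ 2) {c x : ℝ} (hc : 1 ≤ c) (hx : 0 ≤ x) :
    φ (c * x) ≤ √c * φ x := by
  refine le_of_pow_le_pow_left₀ two_ne_zero (mul_nonneg (Real.sqrt_nonneg c) (hnn x hx)) ?_
  rw [mul_pow, Real.sq_sqrt (by linarith)]
  exact h2.map_mul_le_mul (sq_nonneg _) hc hx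

theorem exists_nonpos_mem_negPhiSubdiff (hconc : ConcaveOn ℝ (Ici 0) φ)
    (hmono : MonotoneOn φ (Ici 0)) {x : ℝ} (hx : 0 < x) :
    ∃ m ≤ 0, m ∈ negPhiSubdiff φ x := by
  have hconv : ConvexOn ℝ (Ici 0) (-φ) := hconc.neg
  have hint : x ∈ interior (Ici (0 : ℝ)) := by rwa [interior_Ici]
  have hx1 : x + 1 ∈ Ici (0 : ℝ) := mem_Ici.2 (by linarith)
  refine ⟨derivWithin (-φ) (Ioi x) x, ?_, fun τ hτ => ?_⟩
  · have h := hconv.rightDeriv_le_slope_of_mem_interior hint hx1 (lt_add_one x)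
    have := hmono (mem_Ici.2 hx.le) hx1 (by linarith)
    rw [slope_def_field] at h
    simp only [Pi.neg_apply, add_sub_cancel_left, div_one] at h
    linarith
  rcases lt_trichotomy τ x with hlt | rfl | hgt
  · have h := (hconv.slope_le_leftDeriv_of_mem_interior (mem_Ici.2 hτ) hint hlt).trans
      (hconv.leftDeriv_le_rightDeriv_of_mem_interior hint)
    rw [slope_def_field, div_le_iff₀ (sub_pos.2 hlt)] at h
    simp only [Pi.neg_apply] at h
    linarith
  · simp
  · have h := hconv.rightDeriv_le_slope_of_mem_interior hint (mem_Ici.2 hτ) hgt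
    rw [slope_def_field, le_div_iff₀ (sub_pos.2 hgt)] at h
    simp only [Pi.neg_apply] at h
    linarith

theorem mul_add_le_negPhiStar {s τ : ℝ} (hbdd : BddAbove {y | ∃ τ ≥ (0 : ℝ), y = s * τ + φ τ})
    (hτ : 0 ≤ τ) : s * τ + φ τ ≤ negPhiStar φ s :=
  le_csSup hbdd ⟨τ, hτ, rfl⟩

theorem negPhiStar_le {s a : ℝ} (h : ∀ τ ≥ (0 : ℝ), s * τ + φ τ ≤ a) : negPhiStar φ s ≤ a :=
  csSup_le ⟨_, 0, le_rfl, rfl⟩ fun _ ⟨τ, hτ, hy⟩ => hy ▸ h τ hτ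

theorem mem_negPhiSubdiff_iff {m x : ℝ} :
    m ∈ negPhiSubdiff φ x ↔ ∀ τ ≥ (0 : ℝ), m * τ + φ τ ≤ m * x + φ x := by
  refine forall₂_congr fun τ _ => ?_
  constructor <;> intro h <;> linarith

theorem bddAbove_negPhiStar_set (hnn : ∀ τ ≥ (0 : ℝ), 0 ≤ φ τ) (hmono : MonotoneOn φ (Ici 0))
    (h2 : ConcaveOn ℝ (Ici 0) fun τ => φ τ ^ 2) {s : ℝ} (hs : s < 0) :
    BddAbove {y | ∃ τ ≥ (0 : ℝ), y = s * τ + φ τ} := by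
  refine ⟨φ 1 + φ 1 ^ 2 / (4 * -s), ?_⟩
  rintro _ ⟨τ, hτ, rfl⟩
  have hφ1 := hnn 1 zero_le_one
  have hAMGM : 0 ≤ φ 1 ^ 2 / (4 * -s) := div_nonneg (sq_nonneg _) (by linarith)
  rcases le_total τ 1 with hτ1 | hτ1
  · nlinarith [hmono (mem_Ici.2 hτ) (mem_Ici.2 zero_le_one) hτ1]
  · have hφτ : φ τ ≤ √τ * φ 1 := by simpa using map_mul_le_sqrt_mul hnn h2 hτ1 zero_le_one
    -- complete the square in `r = √τ`
    have hsq : s * τ + √τ * φ 1 ≤ φ 1 ^ 2 / (4 * -s) := by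
      rw [le_div_iff₀ (by linarith)]
      linear_combination sq_nonneg (2 * s * √τ + φ 1) + 4 * s ^ 2 * Real.sq_sqrt hτ
    linarith

theorem isMinOn_iff_mem_negPhiSubdiff (hconc : ConcaveOn ℝ (Ici 0) φ)
    (hmono : MonotoneOn φ (Ici 0))
    (hbdd : ∀ s < 0, BddAbove {y | ∃ τ ≥ (0 : ℝ), y = s * τ + φ τ}) {x s₀ : ℝ} (hx : 0 < x)
    (hs₀ : s₀ < 0) :
    IsMinOn (fun s => -s * x + negPhiStar φ s) (Iio 0) s₀ ↔ s₀ ∈ negPhiSubdiff φ x := by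
  rw [isMinOn_iff, mem_negPhiSubdiff_iff]
  constructor
  · intro hmin
    -- strong duality: a nonpositive subgradient `m` at `x` makes the dual values approach `φ x`
    obtain ⟨m, hm0, hm⟩ := exists_nonpos_mem_negPhiSubdiff hconc hmono hx
    rw [mem_negPhiSubdiff_iff] at hm
    have hstar : negPhiStar φ s₀ ≤ s₀ * x + φ x := by
      refine le_of_forall_pos_le_add fun ε hε => ?_
      have hεx : 0 < ε / x := div_pos hε hx
      have hdual : negPhiStar φ (m - ε / x) ≤ m * x + φ x := negPhiStar_le fun τ hτ => by
        nlinarith [hm τ hτ, mul_nonneg hεx.le hτ]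
      have := hmin (m - ε / x) (mem_Iio.2 (by linarith))
      rw [show -(m - ε / x) * x = ε - m * x by field_simp; ring] at this
      linarith
    exact fun τ hτ => (mul_add_le_negPhiStar (hbdd s₀ hs₀) hτ).trans hstar
  · intro hsub s hs
    have hstar : negPhiStar φ s₀ ≤ s₀ * x + φ x := negPhiStar_le hsub
    have := mul_add_le_negPhiStar (hbdd s hs) hx.le
    linarith

theorem sub_add_map_le_of_mem_negPhiSubdiff {C err α sa sd ra rd t : ℝ} (hC : 0 < C)
    (hα : 0 < α) (ht : 0 ≤ t) (hsub : -(1 / (C * α)) ∈ negPhiSubdiff φ (C * err))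
    (hfid : 1 / C * t - err ≤ sa - sd) (hmin : sa + α * ra ≤ sd + α * rd) :
    ra - rd + φ t ≤ φ (C * err) := by
  have h := mul_le_mul_of_nonneg_left (hsub t ht) hα.le
  rw [show α * (-(1 / (C * α)) * (t - C * err)) = err - 1 / C * t by field_simp; ring] at h
  have : α * (ra - rd + φ t) ≤ α * φ (C * err) := by nlinarith
  exact le_of_mul_le_mul_left this hα

theorem mul_sub_sub_le_of_mem_negPhiSubdiff {C err α β p : ℝ} (hC : 0 < C) (hα : 0 < α)
    {Sa Sd T : ℝ≥0∞} {Ra Rd : EReal} (hRa : Ra ≠ ⊥) (hRd : Rd ≠ ⊥) (hRd' : Rd ≠ ⊤)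
    (hsub : -(1 / (C * α)) ∈ negPhiSubdiff φ (C * err))
    (hfid : ((1 / C : ℝ) : EReal) * (T : EReal) - (err : EReal) ≤ (Sa : EReal) - Sd)
    (hmin : (Sa : EReal) + (α : EReal) * Ra ≤ Sd + (α : EReal) * Rd)
    (hvsc : (β : EReal) * (Ra - Rd - p) ≤ Ra - Rd + phiE φ T) :
    (β : EReal) * (Ra - Rd - p) ≤ (φ (C * err) : EReal) := by
  have hα' : (0 : EReal) < α := by exact_mod_cast hα
  lift Rd to ℝ using ⟨hRd', hRd⟩ with rd
  lift Sd to NNReal using ne_top_of_coe_mul_sub_le_sub (one_div_pos.2 hC).le hfid with sd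
  have hSaRa : (Sa : EReal) ≠ ⊤ ∧ (α : EReal) * Ra ≠ ⊤ :=
    (EReal.add_ne_top_iff_ne_top₂ (EReal.coe_ennreal_ne_bot _)
      ((EReal.mul_ne_bot _ _).2 ⟨.inl (EReal.coe_ne_bot _), .inr hRa, .inl (EReal.coe_ne_top _),
        .inl hα'.le⟩)).1 <| ne_top_of_le_ne_top (by
          rw [EReal.coe_nnreal_eq_coe_real, ← EReal.coe_mul, ← EReal.coe_add]
          exact EReal.coe_ne_top _) hmin
  have hRa' : Ra ≠ ⊤ := by
    rintro rfl
    exact hSaRa.2 (EReal.mul_top_of_pos hα')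
  lift Ra to ℝ using ⟨hRa', hRa⟩ with ra
  lift Sa to NNReal using EReal.coe_ennreal_eq_top_iff.not.1 hSaRa.1 with sa
  have hT : T ≠ ⊤ := by
    rintro rfl
    rw [EReal.coe_ennreal_top, EReal.coe_mul_top_of_pos (one_div_pos.2 hC), EReal.top_sub_coe,
      top_le_iff, EReal.coe_nnreal_eq_coe_real, EReal.coe_nnreal_eq_coe_real, ← EReal.coe_sub]
      at hfid
    exact EReal.coe_ne_top _ hfid
  lift T to NNReal using hT with t
  simp only [phiE, ENNReal.coe_ne_top, if_false, ENNReal.coe_toReal] at hvsc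
  simp only [EReal.coe_nnreal_eq_coe_real] at hfid hmin
  norm_cast at hfid hmin hvsc ⊢
  exact hvsc.trans (sub_add_map_le_of_mem_negPhiSubdiff hC hα t.2 hsub hfid hmin)

end IndexFunction

theorem statement_2_general
    {X Y Yobs : Type*} [NormedAddCommGroup X] [NormedSpace ℝ X]
    (B : Set X) (udag : X) (hudag : udag ∈ B)
    (F : X → Y) (gobs : Yobs)
    (S : Y → Yobs → ℝ≥0∞) (T : Y → Y → ℝ≥0∞)
    (Cerr err : ℝ) (hCerr : 1 ≤ Cerr) (herr : 0 < err)
    -- Assumption (A1)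
    (hA1 : ∀ u ∈ B,
      ((1 / Cerr : ℝ) : EReal) * ((T (F u) (F udag) : ℝ≥0∞) : EReal) - ((err : ℝ) : EReal)
        ≤ ((S (F u) gobs : ℝ≥0∞) : EReal) - ((S (F udag) gobs : ℝ≥0∞) : EReal))
    -- the penalty is proper and convex
    (R : X → EReal)
    (hRbot : ∀ u, R u ≠ ⊥) (hRtop : ∃ u, R u ≠ ⊤)
    -- `u*` is a subgradient of `R` at `u†`
    (ustar : X →L[ℝ] ℝ)
    (hsub : ∀ u : X, R udag + ((ustar (u - udag) : ℝ) : EReal) ≤ R u)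
    -- Assumption (A2): variational source condition
    (φ : ℝ → ℝ) (β : ℝ)
    (hφmono : MonotoneOn φ (Set.Ici (0 : ℝ)))
    (hφnonneg : ∀ τ ≥ (0 : ℝ), 0 ≤ φ τ)
    (hφ2concave : ConcaveOn ℝ (Set.Ici (0 : ℝ)) fun τ => φ τ ^ 2)
    (hA2 : ∀ u ∈ B, ((β : ℝ) : EReal) * bregman R ustar udag u
        ≤ R u - R udag + phiE φ (T (F u) (F udag)))
    -- `u_ᾱ` is a global minimizer of the Tikhonov functional with parameter `ᾱ > 0`
    (αbar : ℝ) (hαbar : 0 < αbar) (uαbar : X) (huαbar : uαbar ∈ B)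
    (hmin : ∀ u ∈ B,
      ((S (F uαbar) gobs : ℝ≥0∞) : EReal) + ((αbar : ℝ) : EReal) * R uαbar
        ≤ ((S (F u) gobs : ℝ≥0∞) : EReal) + ((αbar : ℝ) : EReal) * R u) :
    ((∀ α > (0 : ℝ),
        err / αbar + negPhiStar φ (-(1 / (Cerr * αbar)))
          ≤ err / α + negPhiStar φ (-(1 / (Cerr * α))))
      ↔ -(1 / (Cerr * αbar)) ∈ negPhiSubdiff φ (Cerr * err)) ∧
    (-(1 / (Cerr * αbar)) ∈ negPhiSubdiff φ (Cerr * err) →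
      ((β : ℝ) : EReal) * bregman R ustar udag uαbar
        ≤ ((Real.sqrt Cerr * φ err : ℝ) : EReal)) := by
  have hC : 0 < Cerr := by linarith
  refine ⟨?_, fun hsubdiff => ?_⟩
  · have hφconc := concaveOn_of_concaveOn_sq hφnonneg hφ2concave
    have hbdd := fun s (hs : s < 0) => bddAbove_negPhiStar_set hφnonneg hφmono hφ2concave hs
    have hobj : ∀ α, err / α = -(-(1 / (Cerr * α))) * (Cerr * err) := fun α => by field_simp
    simp only [hobj]
    rw [← isMinOn_iff_mem_negPhiSubdiff hφconc hφmono hbdd (mul_pos hC herr)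
      (neg_neg_of_pos (one_div_pos.2 (mul_pos hC hαbar))),
      ← isMinOn_Ioi_comp_neg_one_div_mul_iff hC, isMinOn_iff]
    rfl
  · obtain ⟨u₀, hu₀⟩ := hRtop
    have hRd : R udag ≠ ⊤ := by
      intro h
      have h₀ := hsub u₀
      rw [h, EReal.top_add_coe, top_le_iff] at h₀
      exact hu₀ h₀
    exact (mul_sub_sub_le_of_mem_negPhiSubdiff hC hαbar (hRbot _) (hRbot _) hRd hsubdiff
      (hA1 uαbar huαbar) (hmin udag hudag) (hA2 uαbar huαbar)).trans
      (EReal.coe_le_coe_iff.2 (map_mul_le_sqrt_mul hφnonneg hφ2concave hCerr herr.le))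

/-- **Optimal a priori parameter choice (Theorem `det_conv`, part 2).**
Under Assumptions (A1) and (A2) with `err > 0`, the infimum over `α > 0` of
`α ↦ err/α + (−φ)*(−1/(C_err·α))` is attained at `α = ᾱ` if and only if
`−1/(C_err·ᾱ) ∈ ∂(−φ)(C_err·err)`, and in that case the minimizer `u_ᾱ` of the
Tikhonov functional satisfies `β·D_{u*}(u_ᾱ, u†) ≤ √C_err·φ(err)`. -/
theorem statement_2
    {X Y Yobs : Type*} [NormedAddCommGroup X] [NormedSpace ℝ X] [CompleteSpace X]
    (B : Set X) (udag : X) (hudag : udag ∈ B)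
    (F : X → Y) (gobs : Yobs)
    (S : Y → Yobs → ℝ≥0∞) (T : Y → Y → ℝ≥0∞)
    (Cerr err : ℝ) (hCerr : 1 ≤ Cerr) (herr : 0 < err)
    -- Assumption (A1)
    (hT0 : T (F udag) (F udag) = 0)
    (hA1 : ∀ u ∈ B,
      ((1 / Cerr : ℝ) : EReal) * ((T (F u) (F udag) : ℝ≥0∞) : EReal) - ((err : ℝ) : EReal)
        ≤ ((S (F u) gobs : ℝ≥0∞) : EReal) - ((S (F udag) gobs : ℝ≥0∞) : EReal))
    -- the penalty is proper and convex
    (R : X → EReal)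
    (hRbot : ∀ u, R u ≠ ⊥) (hRtop : ∃ u, R u ≠ ⊤)
    (hRconv : ∀ u v : X, ∀ a b : ℝ, 0 ≤ a → 0 ≤ b → a + b = 1 →
      R (a • u + b • v) ≤ (a : EReal) * R u + (b : EReal) * R v)
    -- `u*` is a subgradient of `R` at `u†`
    (ustar : X →L[ℝ] ℝ)
    (hsub : ∀ u : X, R udag + ((ustar (u - udag) : ℝ) : EReal) ≤ R u)
    -- Assumption (A2): variational source condition
    (φ : ℝ → ℝ) (β : ℝ) (hβ : 0 < β)
    (hφ0 : φ 0 = 0) (hφmono : MonotoneOn φ (Set.Ici (0 : ℝ)))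
    (hφnonneg : ∀ τ ≥ (0 : ℝ), 0 ≤ φ τ)
    (hφ2concave : ConcaveOn ℝ (Set.Ici (0 : ℝ)) fun τ => φ τ ^ 2)
    (hA2 : ∀ u ∈ B, ((β : ℝ) : EReal) * bregman R ustar udag u
        ≤ R u - R udag + phiE φ (T (F u) (F udag)))
    -- `u_ᾱ` is a global minimizer of the Tikhonov functional with parameter `ᾱ > 0`
    (αbar : ℝ) (hαbar : 0 < αbar) (uαbar : X) (huαbar : uαbar ∈ B)
    (hmin : ∀ u ∈ B,
      ((S (F uαbar) gobs : ℝ≥0∞) : EReal) + ((αbar : ℝ) : EReal) * R uαbar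
        ≤ ((S (F u) gobs : ℝ≥0∞) : EReal) + ((αbar : ℝ) : EReal) * R u) :
    ((∀ α > (0 : ℝ),
        err / αbar + negPhiStar φ (-(1 / (Cerr * αbar)))
          ≤ err / α + negPhiStar φ (-(1 / (Cerr * α))))
      ↔ -(1 / (Cerr * αbar)) ∈ negPhiSubdiff φ (Cerr * err)) ∧
    (-(1 / (Cerr * αbar)) ∈ negPhiSubdiff φ (Cerr * err) →
      ((β : ℝ) : EReal) * bregman R ustar udag uαbar
        ≤ ((Real.sqrt Cerr * φ err : ℝ) : EReal)) :=
  statement_2_general B udag hudag F gobs S T Cerr err hCerr herr hA1 R hRbot hRtop ustar hsub φ β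
    hφmono hφnonneg hφ2concave hA2 αbar hαbar uαbar huαbar hmin

end
end

section
/- Suppose Assumptions (A1) with C_err = 1 and (A2) with β ≥ 1/2 hold, that ‖u − u†‖_X^q ≤ C_bd·D_{u*}(u, u†) for all u ∈ 𝔅 with constants C_bd > 0 and q ≥ 1, and that u_α is a global minimizer over 𝔅 of the Tikhonov functional. Then for all α > 0, ‖u_α − u†‖_X ≤ (1/2)·( f_app(α) + f_noi(α) ), where f_app(α) := 2·( 2·C_bd·(−φ)*(−1/α) )^{1/q} and f_noi(α) := 2·( 2·C_bd·err/α )^{1/q}. -/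
open scoped ENNReal

noncomputable section

/-! Comparing the Tikhonov functional at `u_α` and at `u†` and using (A1) gives
`R(u_α) − R(u†) ≤ (err − T(F u_α; g†))/α`. Inserted into (A2) with `β ≥ 1/2`, the terms
`−T/α + φ(T)` are bounded by `(−φ)*(−1/α)`, so `D_{u*}(u_α, u†) ≤ 2·(err/α + (−φ)*(−1/α))`.
The norm bound then follows from `‖·‖^q ≤ C_bd·D` and subadditivity of `t ↦ t^{1/q}`.
The conjugate `(−φ)*(−1/α)` is finite because concavity of `φ²` with `φ(0) = 0` forces
`φ(τ) ≤ √τ·φ(1)` for `τ ≥ 1`. -/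

open Set

lemma ConcaveOn.le_mul_apply_one {f : ℝ → ℝ} (hf : ConcaveOn ℝ (Ici 0) f) (hf0 : f 0 = 0)
    {τ : ℝ} (hτ : 1 ≤ τ) : f τ ≤ τ * f 1 := by
  have h := hf.slope_anti self_mem_Ici (a := 1) (b := τ) ⟨mem_Ici.2 zero_le_one, one_ne_zero⟩
    ⟨mem_Ici.2 (zero_le_one.trans hτ), (zero_lt_one.trans_le hτ).ne'⟩ hτ
  simp only [slope_def_field, hf0, sub_zero, div_one] at h
  rwa [div_le_iff₀ (zero_lt_one.trans_le hτ), mul_comm] at h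

lemma le_negPhiStar {φ : ℝ → ℝ} {s t : ℝ}
    (hbdd : BddAbove {y | ∃ τ ≥ (0 : ℝ), y = s * τ + φ τ}) (ht : 0 ≤ t) :
    s * t + φ t ≤ negPhiStar φ s :=
  le_csSup hbdd ⟨t, ht, rfl⟩

section IndexFunction

variable {φ : ℝ → ℝ} (hφ0 : φ 0 = 0) (hφ1 : 0 ≤ φ 1)
  (hφ2 : ConcaveOn ℝ (Ici 0) fun τ => φ τ ^ 2)
include hφ0 hφ1 hφ2

lemma le_sqrt_mul_apply_one {τ : ℝ} (hτ : 1 ≤ τ) : φ τ ≤ √τ * φ 1 := by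
  have h := hφ2.le_mul_apply_one (by simp [hφ0]) hτ
  calc φ τ ≤ √(φ τ ^ 2) := by rw [Real.sqrt_sq_eq_abs]; exact le_abs_self _
    _ ≤ √(τ * φ 1 ^ 2) := Real.sqrt_le_sqrt h
    _ = √τ * φ 1 := by rw [Real.sqrt_mul (zero_le_one.trans hτ), Real.sqrt_sq hφ1]

variable (hφmono : MonotoneOn φ (Ici 0))
include hφmono

lemma le_one_add_sqrt_mul_apply_one {τ : ℝ} (hτ : 0 ≤ τ) : φ τ ≤ (1 + √τ) * φ 1 := by
  rcases le_total τ 1 with hτ1 | hτ1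
  · nlinarith [hφmono hτ (mem_Ici.2 zero_le_one) hτ1, Real.sqrt_nonneg τ]
  · nlinarith [le_sqrt_mul_apply_one hφ0 hφ1 hφ2 hτ1]

lemma bddAbove_negPhiStar {s : ℝ} (hs : s < 0) :
    BddAbove {y | ∃ τ ≥ (0 : ℝ), y = s * τ + φ τ} := by
  refine ⟨φ 1 + φ 1 ^ 2 / (4 * -s), ?_⟩
  rintro _ ⟨τ, hτ, rfl⟩
  have hφτ := le_one_add_sqrt_mul_apply_one hφ0 hφ1 hφ2 hφmono hτ
  -- completing the square in `x = √τ`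
  have hsq : s * √τ ^ 2 + √τ * φ 1 ≤ φ 1 ^ 2 / (4 * -s) := by
    rw [le_div_iff₀ (by linarith)]
    nlinarith [sq_nonneg (2 * s * √τ + φ 1)]
  rw [Real.sq_sqrt hτ] at hsq
  linarith

end IndexFunction

lemma le_rpow_one_div_add_rpow_one_div {x a b q : ℝ} (hx : 0 ≤ x) (ha : 0 ≤ a) (hb : 0 ≤ b)
    (hq : 1 ≤ q) (h : x ^ q ≤ a + b) : x ≤ a ^ (1 / q) + b ^ (1 / q) := by
  have hq0 : 0 < q := zero_lt_one.trans_le hq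
  calc x = (x ^ q) ^ (1 / q) := by
        rw [← Real.rpow_mul hx, mul_one_div_cancel hq0.ne', Real.rpow_one]
    _ ≤ (a + b) ^ (1 / q) := by gcongr
    _ ≤ a ^ (1 / q) + b ^ (1 / q) :=
        Real.rpow_add_le_add_rpow ha hb (by positivity) ((div_le_one hq0).2 hq)

lemma bregman_le_of_tikhonov_min {φ : ℝ → ℝ} {α β err P c : ℝ} (hα : 0 < α) (hβ : 1 / 2 ≤ β)
    {S₀ S₁ T₁ : ℝ≥0∞} {R₀ R₁ : EReal} (hS₀top : S₀ ≠ ⊤) (hR₀top : R₀ ≠ ⊤) (hR₀bot : R₀ ≠ ⊥)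
    (hR₁bot : R₁ ≠ ⊥) (hsub : R₀ + c ≤ R₁)
    (hmin : (S₁ : EReal) + α * R₁ ≤ S₀ + α * R₀)
    (hA1 : (T₁ : EReal) - err ≤ S₁ - S₀)
    (hA2 : β * (R₁ - R₀ - c) ≤ R₁ - R₀ + phiE φ T₁)
    (hP : -(1 / α) * T₁.toReal + φ T₁.toReal ≤ P) :
    R₁ - R₀ - c ≤ ((2 * (err / α + P) : ℝ) : EReal) := by
  lift S₀ to NNReal using hS₀top with s₀
  lift R₀ to ℝ using ⟨hR₀top, hR₀bot⟩ with r₀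
  rw [EReal.coe_nnreal_eq_coe_real] at hmin hA1
  induction R₁ using EReal.rec with
  | bot => exact absurd rfl hR₁bot
  | top => simp [EReal.coe_mul_top_of_pos hα, ← EReal.coe_mul, ← EReal.coe_add] at hmin
  | coe r₁ =>
  induction S₁ using ENNReal.recTopCoe with
  | top => simp [← EReal.coe_mul, ← EReal.coe_add] at hmin
  | coe s₁ =>
  induction T₁ using ENNReal.recTopCoe with
  | top => simp [EReal.coe_nnreal_eq_coe_real, ← EReal.coe_sub] at hA1
  | coe t =>
  simp only [phiE, ENNReal.coe_ne_top, if_false, ENNReal.coe_toReal,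
    EReal.coe_nnreal_eq_coe_real] at hmin hA1 hA2 hP
  norm_cast at hsub hmin hA1 hA2 ⊢
  have hgap : r₁ - r₀ ≤ (err - t) / α := by
    rw [le_div_iff₀ hα]
    linarith
  calc r₁ - r₀ - c ≤ 2 * (β * (r₁ - r₀ - c)) := by nlinarith
    _ ≤ 2 * ((err - t) / α + φ t) := by linarith
    _ = 2 * (err / α + (-(1 / α) * t + φ t)) := by ring
    _ ≤ 2 * (err / α + P) := by linarith

theorem statement_12_general
    {X Y Yobs : Type*} [NormedAddCommGroup X] [NormedSpace ℝ X]
    (B : Set X) (udag : X) (hudag : udag ∈ B)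
    (F : X → Y) (gobs : Yobs)
    (S : Y → Yobs → ℝ≥0∞) (T : Y → Y → ℝ≥0∞)
    (err : ℝ) (herr : 0 ≤ err)
    -- Assumption (A1) with `C_err = 1`
    (hT0 : T (F udag) (F udag) = 0)
    (hA1 : ∀ u ∈ B,
      ((T (F u) (F udag) : ℝ≥0∞) : EReal) - ((err : ℝ) : EReal)
        ≤ ((S (F u) gobs : ℝ≥0∞) : EReal) - ((S (F udag) gobs : ℝ≥0∞) : EReal))
    -- the penalty is proper and convex
    (R : X → EReal)
    (hRbot : ∀ u, R u ≠ ⊥) (hRtop : ∃ u, R u ≠ ⊤)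
    -- `u*` is a subgradient of `R` at `u†`
    (ustar : X →L[ℝ] ℝ)
    (hsub : ∀ u : X, R udag + ((ustar (u - udag) : ℝ) : EReal) ≤ R u)
    -- Assumption (A2) with `β ≥ 1/2`
    (φ : ℝ → ℝ) (β : ℝ) (hβ : 1 / 2 ≤ β)
    (hφ0 : φ 0 = 0) (hφmono : MonotoneOn φ (Set.Ici (0 : ℝ)))
    (hφnonneg : ∀ τ ≥ (0 : ℝ), 0 ≤ φ τ)
    (hφ2concave : ConcaveOn ℝ (Set.Ici (0 : ℝ)) fun τ => φ τ ^ 2)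
    (hA2 : ∀ u ∈ B, ((β : ℝ) : EReal) * bregman R ustar udag u
        ≤ R u - R udag + phiE φ (T (F u) (F udag)))
    -- the Bregman distance dominates the `q`-th power of the norm
    (q Cbd : ℝ) (hq : 1 ≤ q) (hCbd : 0 < Cbd)
    (hbd : ∀ u ∈ B, ((‖u - udag‖ ^ q : ℝ) : EReal)
        ≤ ((Cbd : ℝ) : EReal) * bregman R ustar udag u) :
    ∀ α : ℝ, 0 < α → ∀ uα : X, uα ∈ B →
      (∀ u ∈ B,
        ((S (F uα) gobs : ℝ≥0∞) : EReal) + ((α : ℝ) : EReal) * R uα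
          ≤ ((S (F u) gobs : ℝ≥0∞) : EReal) + ((α : ℝ) : EReal) * R u) →
      ‖uα - udag‖ ≤ (1 / 2) *
        (2 * (2 * Cbd * negPhiStar φ (-(1 / α))) ^ (1 / q)
          + 2 * (2 * Cbd * err / α) ^ (1 / q)) := by
  intro α hα uα huα hmin
  have hRudag : R udag ≠ ⊤ := by
    obtain ⟨u, hu⟩ := hRtop
    intro h
    have h' := hsub u
    rw [h, EReal.top_add_coe, top_le_iff] at h'
    exact hu h'
  have hSudag : S (F udag) gobs ≠ ⊤ := by
    intro h
    simpa [hT0, h] using hA1 udag hudag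
  have hbdd := bddAbove_negPhiStar hφ0 (hφnonneg 1 zero_le_one) hφ2concave hφmono
    (neg_neg_of_pos (one_div_pos.2 hα))
  have hP0 : 0 ≤ negPhiStar φ (-(1 / α)) := by simpa [hφ0] using le_negPhiStar hbdd le_rfl
  have hD := bregman_le_of_tikhonov_min hα hβ hSudag hRudag (hRbot udag) (hRbot uα) (hsub uα)
    (hmin udag hudag) (hA1 uα huα) (hA2 uα huα) (le_negPhiStar hbdd ENNReal.toReal_nonneg)
  have hnorm : ‖uα - udag‖ ^ q ≤ 2 * Cbd * negPhiStar φ (-(1 / α)) + 2 * Cbd * err / α := by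
    have h := (hbd uα huα).trans (mul_le_mul_of_nonneg_left hD (by exact_mod_cast hCbd.le))
    norm_cast at h
    exact h.trans_eq (by ring)
  have := le_rpow_one_div_add_rpow_one_div (norm_nonneg _) (by positivity) (by positivity) hq hnorm
  linarith

/-- **Error decomposition for the Lepskiĭ principle.**
Under Assumption (A1) with `C_err = 1` and Assumption (A2) with `β ≥ 1/2`, if
`‖u − u†‖^q ≤ C_bd·D_{u*}(u, u†)` on `𝔅` (with `C_bd > 0`, `q ≥ 1`) and `u_α` is a
global minimizer over `𝔅` of the Tikhonov functional, then for all `α > 0`,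
`‖u_α − u†‖ ≤ (1/2)·(f_app(α) + f_noi(α))`, where
`f_app(α) = 2·(2·C_bd·(−φ)*(−1/α))^{1/q}` and `f_noi(α) = 2·(2·C_bd·err/α)^{1/q}`. -/
theorem statement_12
    {X Y Yobs : Type*} [NormedAddCommGroup X] [NormedSpace ℝ X] [CompleteSpace X]
    (B : Set X) (udag : X) (hudag : udag ∈ B)
    (F : X → Y) (gobs : Yobs)
    (S : Y → Yobs → ℝ≥0∞) (T : Y → Y → ℝ≥0∞)
    (err : ℝ) (herr : 0 ≤ err)
    -- Assumption (A1) with `C_err = 1`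
    (hT0 : T (F udag) (F udag) = 0)
    (hA1 : ∀ u ∈ B,
      ((T (F u) (F udag) : ℝ≥0∞) : EReal) - ((err : ℝ) : EReal)
        ≤ ((S (F u) gobs : ℝ≥0∞) : EReal) - ((S (F udag) gobs : ℝ≥0∞) : EReal))
    -- the penalty is proper and convex
    (R : X → EReal)
    (hRbot : ∀ u, R u ≠ ⊥) (hRtop : ∃ u, R u ≠ ⊤)
    (hRconv : ∀ u v : X, ∀ a b : ℝ, 0 ≤ a → 0 ≤ b → a + b = 1 →
      R (a • u + b • v) ≤ (a : EReal) * R u + (b : EReal) * R v)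
    -- `u*` is a subgradient of `R` at `u†`
    (ustar : X →L[ℝ] ℝ)
    (hsub : ∀ u : X, R udag + ((ustar (u - udag) : ℝ) : EReal) ≤ R u)
    -- Assumption (A2) with `β ≥ 1/2`
    (φ : ℝ → ℝ) (β : ℝ) (hβ : 1 / 2 ≤ β)
    (hφ0 : φ 0 = 0) (hφmono : MonotoneOn φ (Set.Ici (0 : ℝ)))
    (hφnonneg : ∀ τ ≥ (0 : ℝ), 0 ≤ φ τ)
    (hφ2concave : ConcaveOn ℝ (Set.Ici (0 : ℝ)) fun τ => φ τ ^ 2)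
    (hA2 : ∀ u ∈ B, ((β : ℝ) : EReal) * bregman R ustar udag u
        ≤ R u - R udag + phiE φ (T (F u) (F udag)))
    -- the Bregman distance dominates the `q`-th power of the norm
    (q Cbd : ℝ) (hq : 1 ≤ q) (hCbd : 0 < Cbd)
    (hbd : ∀ u ∈ B, ((‖u - udag‖ ^ q : ℝ) : EReal)
        ≤ ((Cbd : ℝ) : EReal) * bregman R ustar udag u) :
    ∀ α : ℝ, 0 < α → ∀ uα : X, uα ∈ B →
      (∀ u ∈ B,
        ((S (F uα) gobs : ℝ≥0∞) : EReal) + ((α : ℝ) : EReal) * R uα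
          ≤ ((S (F u) gobs : ℝ≥0∞) : EReal) + ((α : ℝ) : EReal) * R u) →
      ‖uα - udag‖ ≤ (1 / 2) *
        (2 * (2 * Cbd * negPhiStar φ (-(1 / α))) ^ (1 / q)
          + 2 * (2 * Cbd * err / α) ^ (1 / q)) :=
  statement_12_general B udag hudag F gobs S T err herr hT0 hA1 R hRbot hRtop ustar hsub φ β hβ hφ0
    hφmono hφnonneg hφ2concave hA2 q Cbd hq hCbd hbd

end
end

section
/- Let φ : [0, ∞) → [0, ∞) be a concave index function (monotonically increasing, φ(0) = 0), let α₁ > 0, and suppose α_opt > 0 satisfies 1/α_opt ∈ −∂(−φ)(α₁). Then α₁/α_opt ≤ φ(α₁); in particular, if φ(α₁) ≤ 1 then α₁ ≤ α_opt. -/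
theorem neg_mul_le_of_mem_negPhiSubdiff {φ : ℝ → ℝ} {x m : ℝ} (hφ0 : φ 0 = 0)
    (hm : m ∈ negPhiSubdiff φ x) : -m * x ≤ φ x := by
  simpa [hφ0] using hm 0 le_rfl

theorem statement_13_general (φ : ℝ → ℝ)
    (hφ0 : φ 0 = 0)
    (α₁ : ℝ)
    (αopt : ℝ) (hαopt : 0 < αopt)
    (hsub : -(1 / αopt) ∈ negPhiSubdiff φ α₁) :
    α₁ / αopt ≤ φ α₁ ∧ (φ α₁ ≤ 1 → α₁ ≤ αopt) := by
  have hratio : α₁ / αopt ≤ φ α₁ := by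
    simpa [div_eq_inv_mul] using neg_mul_le_of_mem_negPhiSubdiff hφ0 hsub
  exact ⟨hratio, fun hφ_le_one => (div_le_one hαopt).1 (hratio.trans hφ_le_one)⟩

/-- **Comparison of the optimal parameter with the noise level.**
Let `φ : [0, ∞) → [0, ∞)` be a concave index function (monotonically increasing,
`φ(0) = 0`), let `α₁ > 0`, and suppose `α_opt > 0` satisfies
`1/α_opt ∈ −∂(−φ)(α₁)`. Then `α₁/α_opt ≤ φ(α₁)`; in particular, if `φ(α₁) ≤ 1`
then `α₁ ≤ α_opt`. -/
theorem statement_13 (φ : ℝ → ℝ)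
    (hφ0 : φ 0 = 0)
    (hφmono : MonotoneOn φ (Set.Ici (0 : ℝ)))
    (hφnonneg : ∀ τ ≥ (0 : ℝ), 0 ≤ φ τ)
    (hφconcave : ConcaveOn ℝ (Set.Ici (0 : ℝ)) φ)
    (α₁ : ℝ) (hα₁ : 0 < α₁)
    (αopt : ℝ) (hαopt : 0 < αopt)
    (hsub : -(1 / αopt) ∈ negPhiSubdiff φ α₁) :
    α₁ / αopt ≤ φ α₁ ∧ (φ α₁ ≤ 1 → α₁ ≤ αopt) :=
  statement_13_general φ hφ0 α₁ αopt hαopt hsub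
end
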